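/- arXiv:2202.09074 — 2 statements merged into one kernel-verified Lean document; each statement's English description precedes it below -/
import Mathlib

section
/- Let $c_0 > 0$, $C \ge 0$, $\bar\eta \ge 1$, and let $\eta : [0,\infty) \to (0,\infty)$ be continuously differentiable with $\eta_t \ge c_0(\bar\eta + t)$ and $|\eta_t'| \le C \eta_t$ for all $t \ge 0$. Set $E_t := \int_0^t \eta_s\, ds$. Then there is a constant $C_1$ depending only on $c_0$ and $C$ such that for $\bar\eta$ large enough, for all $t \ge 0$: $\int_0^t e^{-(E_t - E_s)} \eta_s^{-3}\, ds \le C_1 \eta_t^{-4}$. -/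
open intervalIntegral

/-- `x^5 ≤ 3125 * exp x` for `x ≥ 0`, hence `exp (-x) ≤ 3125 / x^5` for `x > 0`. -/
lemma exp_neg_le_aux {x : ℝ} (hx : 0 < x) : Real.exp (-x) ≤ 3125 / x ^ 5 := by
  have h1 : x / 5 + 1 ≤ Real.exp (x / 5) := by
    have := Real.add_one_le_exp (x / 5); linarith
  have h2 : (x / 5) ^ 5 ≤ (x / 5 + 1) ^ 5 := by
    apply pow_le_pow_left₀ (by positivity) (by linarith)
  have h3 : Real.exp (x / 5) ^ 5 = Real.exp x := by
    rw [← Real.exp_nat_mul]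
    norm_num
    ring_nf
  have h4 : x ^ 5 / 3125 ≤ Real.exp x := by
    have h5 : (x / 5 + 1) ^ 5 ≤ Real.exp x := by
      rw [← h3]
      exact pow_le_pow_left₀ (by positivity) h1 5
    have : (x / 5) ^ 5 = x ^ 5 / 3125 := by ring
    linarith
  have hx5 : 0 < x ^ 5 / 3125 := by positivity
  rw [Real.exp_neg]
  calc (Real.exp x)⁻¹ ≤ (x ^ 5 / 3125)⁻¹ := by
        apply inv_anti₀ hx5 h4
    _ = 3125 / x ^ 5 := by rw [inv_div]

/-- Key integral estimate: there is `C₁ > 0` and a threshold `M` (depending only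
on `c₀` and `C`) such that whenever `η̄ ≥ M`, `η t ≥ c₀(η̄ + t)`, `|η'| ≤ C η`,
and `E t = ∫₀ᵗ η`, one has `∫₀ᵗ e^{-(E_t - E_s)} η_s⁻³ ds ≤ C₁ η_t⁻⁴`. -/
theorem duhamel_integral_estimate (c0 C : ℝ) (hc0 : 0 < c0) (hC : 0 ≤ C) :
    ∃ C1 M : ℝ, 0 < C1 ∧ (1:ℝ) ≤ M ∧
      ∀ (etaBar : ℝ), M ≤ etaBar →
        ∀ η η' : ℝ → ℝ,
          (∀ t : ℝ, 0 ≤ t → HasDerivAt η (η' t) t) →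
          (∀ t : ℝ, 0 ≤ t → c0 * (etaBar + t) ≤ η t) →
          (∀ t : ℝ, 0 ≤ t → |η' t| ≤ C * η t) →
          ∀ t : ℝ, 0 ≤ t →
            (∫ s in (0:ℝ)..t,
                Real.exp (-((∫ r in (0:ℝ)..t, η r) - ∫ r in (0:ℝ)..s, η r))
                  / (η s) ^ 3)
              ≤ C1 / (η t) ^ 4 := by
  have hlog2 : 0 < Real.log 2 := Real.log_pos one_lt_two
  set δ : ℝ := Real.log 2 / (C + 1) with hδdef
  have hδpos : 0 < δ := div_pos hlog2 (by linarith)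
  set κ : ℝ := δ / 2 with hκdef
  have hκpos : 0 < κ := by positivity
  have hCδ : C * δ ≤ Real.log 2 := by
    rw [hδdef]
    calc C * (Real.log 2 / (C + 1)) = Real.log 2 * (C / (C + 1)) := by ring
      _ ≤ Real.log 2 * 1 := by
          apply mul_le_mul_of_nonneg_left _ hlog2.le
          exact div_le_one_of_le₀ (by linarith) (by linarith)
      _ = Real.log 2 := mul_one _
  refine ⟨16 + 3125 / (κ ^ 5 * c0 ^ 4), 1, by positivity, le_refl 1, ?_⟩
  intro etaBar hM η η' hderiv hlow hbd t ht
  -- positivity of η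
  have hηpos : ∀ s, 0 ≤ s → 0 < η s := fun s hs =>
    lt_of_lt_of_le (mul_pos hc0 (by linarith)) (hlow s hs)
  have hηc0 : ∀ s, 0 ≤ s → c0 ≤ η s := by
    intro s hs
    have h := hlow s hs
    nlinarith
  have hcont : ContinuousOn η (Set.Ici 0) := fun s hs =>
    ((hderiv s hs).continuousAt).continuousWithinAt
  have hint : ∀ a b : ℝ, 0 ≤ a → 0 ≤ b → IntervalIntegrable η MeasureTheory.volume a b := by
    intro a b ha hb
    apply (hcont.mono ?_).intervalIntegrable
    intro x hx
    exact le_trans (le_inf ha hb) hx.1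
  set A : ℝ := η t with hAdef
  have hApos : 0 < A := hηpos t ht
  have htA : c0 * t ≤ A := by
    have := hlow t ht
    nlinarith
  -- Gronwall lower bound: η s ≥ η t * exp (-C * (t - s)) for 0 ≤ s ≤ t
  have hgron : ∀ s ∈ Set.Icc (0:ℝ) t, A * Real.exp (-C * (t - s)) ≤ η s := by
    intro s hs
    have hanti : AntitoneOn (fun u => η u * Real.exp (-C * u)) (Set.Icc 0 t) := by
      have hd : ∀ x ∈ Set.Ioo (0:ℝ) t,
          HasDerivAt (fun u => η u * Real.exp (-C * u))
            (η' x * Real.exp (-C * x) + η x * (Real.exp (-C * x) * (-C * 1))) x := by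
        intro x hx
        exact (hderiv x hx.1.le).mul (((hasDerivAt_id x).const_mul (-C)).exp)
      apply antitoneOn_of_deriv_nonpos (convex_Icc 0 t)
      · exact (hcont.mono Set.Icc_subset_Ici_self).mul
          (Real.continuous_exp.comp (continuous_const.mul continuous_id)).continuousOn
      · intro x hx
        rw [interior_Icc] at hx
        exact (hd x hx).differentiableAt.differentiableWithinAt
      · intro x hx
        rw [interior_Icc] at hx
        rw [(hd x hx).deriv]
        have habs := abs_le.mp (hbd x hx.1.le)
        have hexp := Real.exp_pos (-C * x)
        nlinarith [hexp.le, habs.2]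
    have h := hanti hs (Set.right_mem_Icc.mpr ht) hs.2
    simp only at h
    have h2 := mul_le_mul_of_nonneg_right h (Real.exp_pos (C * s)).le
    have e1 : η t * Real.exp (-C * t) * Real.exp (C * s) = A * Real.exp (-C * (t - s)) := by
      rw [mul_assoc, ← Real.exp_add, hAdef]
      ring_nf
    have e2 : η s * Real.exp (-C * s) * Real.exp (C * s) = η s := by
      rw [mul_assoc, ← Real.exp_add]
      ring_nf
      rw [Real.exp_zero, mul_one]
    rw [e1, e2] at h2
    exact h2
  -- near bound: η s ≥ A / 2 when t - δ ≤ s ≤ t, 0 ≤ s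
  have hnear : ∀ s, 0 ≤ s → t - δ ≤ s → s ≤ t → A / 2 ≤ η s := by
    intro s h0 h1 h2
    have hg := hgron s ⟨h0, h2⟩
    have hle : -Real.log 2 ≤ -C * (t - s) := by
      have : C * (t - s) ≤ C * δ := by
        apply mul_le_mul_of_nonneg_left _ hC
        linarith
      linarith
    have hexp : Real.exp (-Real.log 2) = 1 / 2 := by
      rw [Real.exp_neg, Real.exp_log two_pos]
      norm_num
    have : A * Real.exp (-Real.log 2) ≤ A * Real.exp (-C * (t - s)) :=
      mul_le_mul_of_nonneg_left (Real.exp_le_exp.mpr hle) hApos.le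
    rw [hexp] at this
    linarith
  -- E t - E s = ∫ s..t η
  have hEdiff : ∀ s ∈ Set.Icc (0:ℝ) t,
      (∫ r in (0:ℝ)..t, η r) - ∫ r in (0:ℝ)..s, η r = ∫ r in s..t, η r := by
    intro s hs
    exact integral_interval_sub_left (hint 0 t le_rfl ht) (hint 0 s le_rfl hs.1)
  -- lower bound on ∫ s..t η in the near regime
  have hEnear : ∀ s, 0 ≤ s → t - δ ≤ s → s ≤ t → A / 2 * (t - s) ≤ ∫ r in s..t, η r := by
    intro s h0 h1 h2
    have hm : (∫ r in s..t, (A / 2 : ℝ)) ≤ ∫ r in s..t, η r := by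
      apply integral_mono_on h2 intervalIntegrable_const (hint s t h0 ht)
      intro x hx
      exact hnear x (le_trans h0 hx.1) (le_trans h1 hx.1) hx.2
    rwa [integral_const, smul_eq_mul, mul_comm] at hm
  -- lower bound on ∫ s..t η in the far regime
  have hEfar : ∀ s, 0 ≤ s → s ≤ t - δ → κ * A ≤ ∫ r in s..t, η r := by
    intro s h0 h1
    have htδ : (0:ℝ) ≤ t - δ := le_trans h0 h1
    have hsplit : (∫ r in s..(t - δ), η r) + ∫ r in (t - δ)..t, η r = ∫ r in s..t, η r :=
      integral_add_adjacent_intervals (hint s (t - δ) h0 htδ) (hint (t - δ) t htδ ht)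
    have hfirst : (0:ℝ) ≤ ∫ r in s..(t - δ), η r := by
      apply integral_nonneg h1
      intro x hx
      exact (hηpos x (le_trans h0 hx.1)).le
    have hsecond : A / 2 * δ ≤ ∫ r in (t - δ)..t, η r := by
      have h2 := hEnear (t - δ) htδ le_rfl (by linarith)
      rw [show t - (t - δ) = δ by ring] at h2
      exact h2
    have heq : κ * A = A / 2 * δ := by rw [hκdef]; ring
    linarith
  -- pointwise bound on the integrand
  set g : ℝ → ℝ := fun s =>
    1 / c0 ^ 3 * Real.exp (-(κ * A)) + 8 / A ^ 3 * Real.exp (A / 2 * (s - t)) with hgdef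
  have hpt : ∀ s ∈ Set.Icc (0:ℝ) t,
      Real.exp (-((∫ r in (0:ℝ)..t, η r) - ∫ r in (0:ℝ)..s, η r)) / (η s) ^ 3 ≤ g s := by
    intro s hs
    rw [hEdiff s hs]
    rcases le_or_gt (t - δ) s with hcase | hcase
    · -- near regime
      have hη2 : A / 2 ≤ η s := hnear s hs.1 hcase hs.2
      have hE : A / 2 * (t - s) ≤ ∫ r in s..t, η r := hEnear s hs.1 hcase hs.2
      have hexp : Real.exp (-(∫ r in s..t, η r)) ≤ Real.exp (A / 2 * (s - t)) := by
        apply Real.exp_le_exp.mpr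
        nlinarith
      have hcube : A ^ 3 / 8 ≤ (η s) ^ 3 := by
        have h2 : (A / 2) ^ 3 ≤ (η s) ^ 3 := pow_le_pow_left₀ (by positivity) hη2 3
        nlinarith [h2]
      have hdiv : Real.exp (-(∫ r in s..t, η r)) / (η s) ^ 3
          ≤ Real.exp (A / 2 * (s - t)) / (A ^ 3 / 8) := by
        apply div_le_div₀ (Real.exp_pos _).le hexp (by positivity) hcube
      have he : Real.exp (A / 2 * (s - t)) / (A ^ 3 / 8)
          = 8 / A ^ 3 * Real.exp (A / 2 * (s - t)) := by
        field_simp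
      have hg1 : (0:ℝ) ≤ 1 / c0 ^ 3 * Real.exp (-(κ * A)) := by positivity
      rw [hgdef]
      simp only
      rw [he] at hdiv
      linarith
    · -- far regime
      have hE : κ * A ≤ ∫ r in s..t, η r := hEfar s hs.1 hcase.le
      have hexp : Real.exp (-(∫ r in s..t, η r)) ≤ Real.exp (-(κ * A)) := by
        apply Real.exp_le_exp.mpr
        linarith
      have hcube : c0 ^ 3 ≤ (η s) ^ 3 := pow_le_pow_left₀ hc0.le (hηc0 s hs.1) 3
      have hdiv : Real.exp (-(∫ r in s..t, η r)) / (η s) ^ 3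
          ≤ Real.exp (-(κ * A)) / c0 ^ 3 := by
        apply div_le_div₀ (Real.exp_pos _).le hexp (by positivity) hcube
      have hg2 : (0:ℝ) ≤ 8 / A ^ 3 * Real.exp (A / 2 * (s - t)) := by positivity
      rw [hgdef]
      simp only
      have : Real.exp (-(κ * A)) / c0 ^ 3 = 1 / c0 ^ 3 * Real.exp (-(κ * A)) := by ring
      linarith [hdiv, this.le, this.ge]
  -- integrability of the integrand
  have hEcont : ContinuousOn (fun s => ∫ r in (0:ℝ)..s, η r) (Set.uIcc 0 t) :=
    continuousOn_primitive_interval' (hint 0 t le_rfl ht) Set.left_mem_uIcc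
  have huIcc : Set.uIcc (0:ℝ) t = Set.Icc 0 t := Set.uIcc_of_le ht
  have hfcont : ContinuousOn
      (fun s => Real.exp (-((∫ r in (0:ℝ)..t, η r) - ∫ r in (0:ℝ)..s, η r)) / (η s) ^ 3)
      (Set.uIcc 0 t) := by
    apply ContinuousOn.div
    · exact (Real.continuous_exp.comp_continuousOn ((continuousOn_const.sub hEcont).neg))
    · exact ((hcont.mono (by rw [huIcc]; exact Set.Icc_subset_Ici_self)).pow 3)
    · intro x hx
      rw [huIcc] at hx
      exact pow_ne_zero 3 (hηpos x hx.1).ne'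
  have hf_int : IntervalIntegrable
      (fun s => Real.exp (-((∫ r in (0:ℝ)..t, η r) - ∫ r in (0:ℝ)..s, η r)) / (η s) ^ 3)
      MeasureTheory.volume 0 t := hfcont.intervalIntegrable
  have hexp_lin : Continuous fun s : ℝ => Real.exp (A / 2 * (s - t)) :=
    Real.continuous_exp.comp (continuous_const.mul (continuous_id.sub continuous_const))
  have hg_cont : Continuous g := by
    rw [hgdef]
    exact continuous_const.add (continuous_const.mul hexp_lin)
  have hg_int : IntervalIntegrable g MeasureTheory.volume 0 t := hg_cont.intervalIntegrable 0 t
  -- main comparison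
  have hmain : (∫ s in (0:ℝ)..t,
      Real.exp (-((∫ r in (0:ℝ)..t, η r) - ∫ r in (0:ℝ)..s, η r)) / (η s) ^ 3)
      ≤ ∫ s in (0:ℝ)..t, g s :=
    integral_mono_on ht hf_int hg_int hpt
  -- compute the integral of g
  have hg_split : (∫ s in (0:ℝ)..t, g s)
      = (∫ s in (0:ℝ)..t, 1 / c0 ^ 3 * Real.exp (-(κ * A)))
        + ∫ s in (0:ℝ)..t, 8 / A ^ 3 * Real.exp (A / 2 * (s - t)) := by
    rw [hgdef]
    apply integral_add
    · exact intervalIntegrable_const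
    · exact (continuous_const.mul hexp_lin).intervalIntegrable 0 t
  have hg1_val : (∫ s in (0:ℝ)..t, 1 / c0 ^ 3 * Real.exp (-(κ * A)))
      = t * (1 / c0 ^ 3 * Real.exp (-(κ * A))) := by
    rw [integral_const, smul_eq_mul, sub_zero]
  -- integral of the exponential part
  have hg2_val : (∫ s in (0:ℝ)..t, Real.exp (A / 2 * (s - t)))
      = 2 / A * (1 - Real.exp (A / 2 * (0 - t))) := by
    have hF : ∀ s ∈ Set.uIcc (0:ℝ) t,
        HasDerivAt (fun u => 2 / A * Real.exp (A / 2 * (u - t)))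
          (Real.exp (A / 2 * (s - t))) s := by
      intro s _
      have h1 : HasDerivAt (fun u : ℝ => A / 2 * (u - t)) (A / 2 * 1) s :=
        ((hasDerivAt_id s).sub_const t).const_mul (A / 2)
      have h2 := (h1.exp).const_mul (2 / A)
      convert h2 using 1
      show Real.exp (A / 2 * (s - t)) = 2 / A * (Real.exp (A / 2 * (s - t)) * (A / 2 * 1))
      rw [mul_comm (2 / A), mul_assoc, mul_one, div_mul_div_comm, mul_comm A 2, div_self (by positivity), mul_one]
      all_goals rfl
    have := integral_eq_sub_of_hasDerivAt hF (hexp_lin.intervalIntegrable 0 t)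
    rw [this]
    rw [show A / 2 * (t - t) = 0 by ring, Real.exp_zero]
    ring
  have hg2_le : (∫ s in (0:ℝ)..t, 8 / A ^ 3 * Real.exp (A / 2 * (s - t))) ≤ 16 / A ^ 4 := by
    rw [integral_const_mul, hg2_val]
    have hexp01 : 0 < Real.exp (A / 2 * (0 - t)) := Real.exp_pos _
    have h8 : (0:ℝ) < 8 / A ^ 3 := by positivity
    calc 8 / A ^ 3 * (2 / A * (1 - Real.exp (A / 2 * (0 - t))))
        ≤ 8 / A ^ 3 * (2 / A * 1) := by
          apply mul_le_mul_of_nonneg_left _ h8.le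
          apply mul_le_mul_of_nonneg_left _ (by positivity)
          linarith
      _ = 16 / A ^ 4 := by field_simp; ring
  -- far part final bound
  have hfar_le : t * (1 / c0 ^ 3 * Real.exp (-(κ * A))) ≤ 3125 / (κ ^ 5 * c0 ^ 4) / A ^ 4 := by
    have hκA : 0 < κ * A := mul_pos hκpos hApos
    have hee : Real.exp (-(κ * A)) ≤ 3125 / (κ * A) ^ 5 := exp_neg_le_aux hκA
    have htpos : 0 ≤ t := ht
    have h1 : t * (1 / c0 ^ 3 * Real.exp (-(κ * A))) ≤ t * (1 / c0 ^ 3 * (3125 / (κ * A) ^ 5)) := by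
      apply mul_le_mul_of_nonneg_left _ htpos
      apply mul_le_mul_of_nonneg_left hee (by positivity)
    have e1 : t * (1 / c0 ^ 3 * (3125 / (κ * A) ^ 5))
        = (c0 * t) * (3125 / (c0 ^ 4 * κ ^ 5 * A ^ 5)) := by
      field_simp
    have e2 : 3125 / (κ ^ 5 * c0 ^ 4) / A ^ 4 = A * (3125 / (c0 ^ 4 * κ ^ 5 * A ^ 5)) := by
      field_simp
    have h2 : t * (1 / c0 ^ 3 * (3125 / (κ * A) ^ 5)) ≤ 3125 / (κ ^ 5 * c0 ^ 4) / A ^ 4 := by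
      rw [e1, e2]
      exact mul_le_mul_of_nonneg_right htA (by positivity)
    linarith
  calc (∫ s in (0:ℝ)..t,
      Real.exp (-((∫ r in (0:ℝ)..t, η r) - ∫ r in (0:ℝ)..s, η r)) / (η s) ^ 3)
      ≤ ∫ s in (0:ℝ)..t, g s := hmain
    _ = (∫ s in (0:ℝ)..t, 1 / c0 ^ 3 * Real.exp (-(κ * A)))
        + ∫ s in (0:ℝ)..t, 8 / A ^ 3 * Real.exp (A / 2 * (s - t)) := hg_split
    _ ≤ 3125 / (κ ^ 5 * c0 ^ 4) / A ^ 4 + 16 / A ^ 4 := by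
        rw [hg1_val]
        exact add_le_add hfar_le hg2_le
    _ ≤ (16 + 3125 / (κ ^ 5 * c0 ^ 4)) / A ^ 4 := by
        rw [add_div]
        linarith
end

section
/- Let $q \ge 1$, $\theta \in [0,\pi]$, and let $v, v_* \in \mathbb{R}^3$, $\sigma \in S^2$ with $v' = \frac{v+v_*}{2} + \frac{|v-v_*|}{2}\sigma$ and $\cos\theta = \frac{(v-v_*)}{|v-v_*|}\cdot\sigma$ (assuming $v \ne v_*$). Then there is a constant $C_q$ depending only on $q$ such that $\left| \langle v' \rangle^q - \langle v \rangle^q \right| \le C_q \sin(\theta/2) \, \langle v \rangle^q \langle v_* \rangle^q$, where $\langle u \rangle = \sqrt{1+|u|^2}$. -/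
/-!
Since `v' - v = (|v - v⋆| σ - (v - v⋆)) / 2` and `σ` makes the angle `θ` with `v - v⋆`, the law of
cosines gives `|v' - v| = |v - v⋆| sin (θ/2)`. The weight `⟨·⟩` is 1-Lipschitz, and both `⟨v⟩` and
`⟨v'⟩` lie in `[1, ⟨v⟩⟨v⋆⟩]` because `|v'|² ≤ |v|² + |v⋆|²`; so the mean value theorem for `x ↦ x^q`
bounds the difference by `q (⟨v⟩⟨v⋆⟩)^(q-1) |v - v⋆| sin (θ/2)`, and `|v - v⋆| ≤ ⟨v⟩⟨v⋆⟩`.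
-/

open Real

lemma abs_rpow_sub_rpow_le {q M a b : ℝ} (hq : 1 ≤ q) (ha : 0 ≤ a) (haM : a ≤ M) (hb : 0 ≤ b)
    (hbM : b ≤ M) : |a ^ q - b ^ q| ≤ q * M ^ (q - 1) * |a - b| := by
  have hderiv : ∀ x ∈ Set.Icc 0 M,
      HasDerivWithinAt (fun x : ℝ => x ^ q) (q * x ^ (q - 1)) (Set.Icc 0 M) x :=
    fun x _ => (hasDerivAt_rpow_const (Or.inr hq)).hasDerivWithinAt
  have hbound : ∀ x ∈ Set.Icc 0 M, ‖q * x ^ (q - 1)‖ ≤ q * M ^ (q - 1) := by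
    rintro x ⟨hx0, hxM⟩
    rw [norm_of_nonneg (by positivity)]
    gcongr
  simpa using (convex_Icc 0 M).norm_image_sub_le_of_norm_hasDerivWithin_le hderiv hbound
    ⟨hb, hbM⟩ ⟨ha, haM⟩

section JapaneseBracket

variable {E : Type*} [NormedAddCommGroup E]

noncomputable def japaneseBracket (x : E) : ℝ := √(1 + ‖x‖ ^ 2)

lemma sq_japaneseBracket (x : E) : japaneseBracket x ^ 2 = 1 + ‖x‖ ^ 2 :=
  sq_sqrt (by positivity)

lemma one_le_japaneseBracket (x : E) : 1 ≤ japaneseBracket x :=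
  one_le_sqrt.2 (by simp)

lemma japaneseBracket_pos (x : E) : 0 < japaneseBracket x :=
  zero_lt_one.trans_le (one_le_japaneseBracket x)

lemma norm_le_japaneseBracket (x : E) : ‖x‖ ≤ japaneseBracket x :=
  le_sqrt_of_sq_le (by linarith)

lemma abs_japaneseBracket_sub_le (x y : E) :
    |japaneseBracket x - japaneseBracket y| ≤ ‖x - y‖ := by
  have hpos : 0 < japaneseBracket x + japaneseBracket y :=
    add_pos (japaneseBracket_pos x) (japaneseBracket_pos y)
  have hfactor : |japaneseBracket x - japaneseBracket y| * (japaneseBracket x + japaneseBracket y)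
      = |‖x‖ - ‖y‖| * (‖x‖ + ‖y‖) := by
    rw [← abs_of_pos hpos, ← abs_mul, ← abs_of_nonneg (by positivity : 0 ≤ ‖x‖ + ‖y‖), ← abs_mul]
    congr 1
    linear_combination sq_japaneseBracket x - sq_japaneseBracket y
  refine le_of_mul_le_mul_right ?_ hpos
  calc |japaneseBracket x - japaneseBracket y| * (japaneseBracket x + japaneseBracket y)
      = |‖x‖ - ‖y‖| * (‖x‖ + ‖y‖) := hfactor
    _ ≤ ‖x - y‖ * (japaneseBracket x + japaneseBracket y) := by
      gcongr
      · exact abs_norm_sub_norm_le x y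
      · exact norm_le_japaneseBracket x
      · exact norm_le_japaneseBracket y

lemma japaneseBracket_le_mul_of_sq_le {x y z : E} (h : ‖z‖ ^ 2 ≤ ‖x‖ ^ 2 + ‖y‖ ^ 2) :
    japaneseBracket z ≤ japaneseBracket x * japaneseBracket y := by
  rw [japaneseBracket, japaneseBracket, japaneseBracket, ← sqrt_mul (by positivity)]
  gcongr
  nlinarith [mul_nonneg (sq_nonneg ‖x‖) (sq_nonneg ‖y‖)]

lemma norm_add_norm_le_mul_japaneseBracket (x y : E) :
    ‖x‖ + ‖y‖ ≤ japaneseBracket x * japaneseBracket y := by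
  rw [japaneseBracket, japaneseBracket, ← sqrt_mul (by positivity)]
  refine le_sqrt_of_sq_le ?_
  nlinarith [sq_nonneg (‖x‖ * ‖y‖ - 1)]

end JapaneseBracket

section Collision

variable {F : Type*} [NormedAddCommGroup F] [InnerProductSpace ℝ F]

local notation "⟪" x ", " y "⟫" => inner ℝ x y

lemma norm_norm_smul_sub_eq {u σ : F} {θ : ℝ} (hσ : ‖σ‖ = 1) (hcos : ⟪u, σ⟫ = ‖u‖ * cos θ) :
    ‖‖u‖ • σ - u‖ = 2 * ‖u‖ * |sin (θ / 2)| := by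
  refine (pow_left_inj₀ (norm_nonneg _) (by positivity) two_ne_zero).1 ?_
  have hcos_half : cos θ = 1 - 2 * sin (θ / 2) ^ 2 := by
    rw [← cos_two_mul_eq_one_sub, mul_div_cancel₀ θ two_ne_zero]
  rw [norm_sub_sq_real, real_inner_smul_left, real_inner_comm, hcos, norm_smul, norm_norm, hσ,
    hcos_half, mul_pow, mul_pow, sq_abs]
  ring

noncomputable def postcollisionalVelocity (v vs σ : F) : F :=
  (1 / 2 : ℝ) • (v + vs) + (‖v - vs‖ / 2) • σ

lemma norm_postcollisionalVelocity_sub {v vs σ : F} {θ : ℝ} (hσ : ‖σ‖ = 1)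
    (hcos : ⟪v - vs, σ⟫ = ‖v - vs‖ * cos θ) :
    ‖postcollisionalVelocity v vs σ - v‖ = ‖v - vs‖ * |sin (θ / 2)| := by
  have hdiff : postcollisionalVelocity v vs σ - v = (1 / 2 : ℝ) • (‖v - vs‖ • σ - (v - vs)) := by
    rw [postcollisionalVelocity]
    module
  rw [hdiff, norm_smul, norm_norm_smul_sub_eq hσ hcos]
  norm_num
  ring

lemma sq_norm_postcollisionalVelocity_le (v vs : F) {σ : F} (hσ : ‖σ‖ ≤ 1) :
    ‖postcollisionalVelocity v vs σ‖ ^ 2 ≤ ‖v‖ ^ 2 + ‖vs‖ ^ 2 := by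
  have htri : ‖postcollisionalVelocity v vs σ‖ ≤ ‖v + vs‖ / 2 + ‖v - vs‖ / 2 := by
    refine (norm_add_le _ _).trans ?_
    rw [norm_smul, norm_smul, norm_of_nonneg (by positivity : (0 : ℝ) ≤ ‖v - vs‖ / 2)]
    norm_num
    nlinarith [norm_nonneg (v - vs)]
  have hpar : ‖v + vs‖ ^ 2 + ‖v - vs‖ ^ 2 = 2 * (‖v‖ ^ 2 + ‖vs‖ ^ 2) := by
    rw [norm_add_sq_real, norm_sub_sq_real]
    ring
  nlinarith [norm_nonneg (postcollisionalVelocity v vs σ), sq_nonneg (‖v + vs‖ - ‖v - vs‖)]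

end Collision

/-- Weight-difference estimate for post-collisional velocities: there is a
constant `C_q` depending only on `q ≥ 1` such that
`|⟨v'⟩^q - ⟨v⟩^q| ≤ C_q sin(θ/2) ⟨v⟩^q ⟨v_*⟩^q`. -/
theorem weight_difference_estimate (q : ℝ) (hq : 1 ≤ q) :
    ∃ C : ℝ, 0 < C ∧
      ∀ (v vs σ : EuclideanSpace ℝ (Fin 3)) (θ : ℝ),
        v ≠ vs → ‖σ‖ = 1 → 0 ≤ θ → θ ≤ Real.pi →
        Real.cos θ = inner ℝ ((‖v - vs‖⁻¹ : ℝ) • (v - vs)) σ →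
        ∀ v' : EuclideanSpace ℝ (Fin 3),
          v' = (1/2 : ℝ) • (v + vs) + (‖v - vs‖ / 2) • σ →
          |Real.sqrt (1 + ‖v'‖ ^ 2) ^ q - Real.sqrt (1 + ‖v‖ ^ 2) ^ q|
            ≤ C * Real.sin (θ / 2) *
              (Real.sqrt (1 + ‖v‖ ^ 2) ^ q * Real.sqrt (1 + ‖vs‖ ^ 2) ^ q) := by
  refine ⟨q, by linarith, fun v vs σ θ hne hσ hθ0 hθπ hcos v' hv' => ?_⟩
  obtain rfl : v' = postcollisionalVelocity v vs σ := hv'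
  set v' := postcollisionalVelocity v vs σ
  have hinner : inner ℝ (v - vs) σ = ‖v - vs‖ * cos θ := by
    rw [hcos, real_inner_smul_left, ← mul_assoc,
      mul_inv_cancel₀ (norm_ne_zero_iff.2 (sub_ne_zero.2 hne)), one_mul]
  have hsin : 0 ≤ sin (θ / 2) := sin_nonneg_of_nonneg_of_le_pi (by linarith) (by linarith)
  set M := japaneseBracket v * japaneseBracket vs
  have hM0 : 0 < M := mul_pos (japaneseBracket_pos v) (japaneseBracket_pos vs)
  have hM : japaneseBracket v' ≤ M :=
    japaneseBracket_le_mul_of_sq_le (sq_norm_postcollisionalVelocity_le v vs hσ.le)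
  have hvM : japaneseBracket v ≤ M :=
    le_mul_of_one_le_right (japaneseBracket_pos v).le (one_le_japaneseBracket vs)
  have hdistM : ‖v - vs‖ ≤ M := (norm_sub_le v vs).trans (norm_add_norm_le_mul_japaneseBracket v vs)
  change |japaneseBracket v' ^ q - japaneseBracket v ^ q|
    ≤ q * sin (θ / 2) * (japaneseBracket v ^ q * japaneseBracket vs ^ q)
  calc _ ≤ q * M ^ (q - 1) * |japaneseBracket v' - japaneseBracket v| :=
        abs_rpow_sub_rpow_le hq (japaneseBracket_pos _).le hM (japaneseBracket_pos v).le hvM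
    _ ≤ q * M ^ (q - 1) * (‖v - vs‖ * sin (θ / 2)) := by
        gcongr ?_ * ?_
        rw [← abs_of_nonneg hsin, ← norm_postcollisionalVelocity_sub hσ hinner]
        exact abs_japaneseBracket_sub_le _ _
    _ ≤ q * M ^ (q - 1) * (M * sin (θ / 2)) := by gcongr
    _ = q * sin (θ / 2) * M ^ q := by
        rw [rpow_sub_one hM0.ne']
        field_simp
    _ = q * sin (θ / 2) * (japaneseBracket v ^ q * japaneseBracket vs ^ q) := by
        rw [mul_rpow (japaneseBracket_pos v).le (japaneseBracket_pos vs).le]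
end
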